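/- Let A > 0, ε > 0, N > 0. (a) With J = (ε + 2AN)/(9A), the triple (J1, J3, Θ) = (J, J, 0) solves the Chow–Kim critical-point system, and 0 < J < N/2 holds if and only if N > 2ε/(5A). (b) With J = (2AN − ε)/(7A), the triple (J1, J3, Θ) = (J, J, π) solves the Chow–Kim critical-point system whenever J ≥ 0, and J > 0 holds if and only if N > ε/(2A). -/

import Mathlib

/-- The Chow–Kim critical-point system in the variables `(J₁, J₃, Θ)`. -/
def CKsystem (A ε N J1 J3 Θ : ℝ) : Prop :=
  Real.sqrt (J1 * J3) * (2 * ε - A * (J1 + J3))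
      + 2 * A * (N * (J1 + J3) - J1 ^ 2 - 6 * J1 * J3 - J3 ^ 2) * Real.cos Θ = 0 ∧
  Real.sqrt (J1 * J3) * (N - J1 - J3) * Real.sin Θ = 0

/-- On the diagonal `J₁ = J₃ = J ≥ 0` we have `√(J₁J₃) = J`, and the first equation
factors as `2J · (ε - AJ + 2A(N - 4J) cos Θ) = 0`. -/
lemma CKsystem_self_of_sin_eq_zero {A ε N J Θ : ℝ} (hJ : 0 ≤ J) (hsin : Real.sin Θ = 0)
    (h : ε - A * J + 2 * A * (N - 4 * J) * Real.cos Θ = 0) : CKsystem A ε N J J Θ := by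
  refine ⟨?_, by rw [hsin, mul_zero]⟩
  rw [Real.sqrt_mul_self hJ]
  linear_combination 2 * J * h

/-- (a) `(J, J, 0)` with `J = (ε+2AN)/(9A)` solves the Chow–Kim system, and
`0 < J < N/2` iff `N > 2ε/(5A)`; (b) `(J, J, π)` with `J = (2AN−ε)/(7A)` solves
the system whenever `J ≥ 0`, and `J > 0` iff `N > ε/(2A)`. -/
theorem CK_symmetric_solutions (A ε N : ℝ) (hA : 0 < A) (hε : 0 < ε) (hN : 0 < N) :
    (CKsystem A ε N ((ε + 2 * A * N) / (9 * A)) ((ε + 2 * A * N) / (9 * A)) 0 ∧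
      ((0 < (ε + 2 * A * N) / (9 * A) ∧ (ε + 2 * A * N) / (9 * A) < N / 2)
        ↔ N > 2 * ε / (5 * A))) ∧
    ((0 ≤ (2 * A * N - ε) / (7 * A) →
        CKsystem A ε N ((2 * A * N - ε) / (7 * A)) ((2 * A * N - ε) / (7 * A)) Real.pi) ∧
      (0 < (2 * A * N - ε) / (7 * A) ↔ N > ε / (2 * A))) := by
  have hJ₀ : 9 * A * ((ε + 2 * A * N) / (9 * A)) = ε + 2 * A * N := by field_simp
  have hJπ : 7 * A * ((2 * A * N - ε) / (7 * A)) = 2 * A * N - ε := by field_simp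
  refine ⟨⟨?_, ?_⟩, ?_, ?_⟩
  · refine CKsystem_self_of_sin_eq_zero (by positivity) Real.sin_zero ?_
    rw [Real.cos_zero]
    linarith
  · rw [gt_iff_lt, div_lt_iff₀ (by positivity), div_lt_iff₀ (by positivity)]
    exact ⟨fun h => by linarith [h.2], fun h => ⟨by positivity, by linarith⟩⟩
  · intro hJ
    refine CKsystem_self_of_sin_eq_zero hJ Real.sin_pi ?_
    rw [Real.cos_pi]
    linarith
  · rw [gt_iff_lt, div_lt_iff₀ (by positivity), div_pos_iff_of_pos_right (by positivity)]
    constructor <;> intro h <;> linarith
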